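/- Let G be a global amoeba of order n with degree sequence d_1 ≥ d_2 ≥ ... ≥ d_n and maximum degree Δ. Then the set of degrees {d_i : i ∈ [n]} equals [Δ] = {1,...,Δ} or {0} ∪ [Δ], and moreover d_i ≤ n + 1 − i for every i ∈ [n]. -/

import Mathlib

open SimpleGraph Equiv

/-- The labeled copy `G_σ`, with edges `v_{σ⁻¹ i} v_{σ⁻¹ j}` for edges `v_i v_j` of `G`. -/
def copyG {V : Type*} (G : SimpleGraph V) (σ : Equiv.Perm V) : SimpleGraph V where
  Adj a b := G.Adj (σ a) (σ b)
  symm := ⟨fun _ _ h => G.symm.symm _ _ h⟩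
  loopless := ⟨fun _ h => G.loopless.irrefl _ h⟩

/-- The graph `G - v_r v_s + v_k v_l`. -/
def replaceG {V : Type*} (G : SimpleGraph V) (r s k l : V) : SimpleGraph V :=
  SimpleGraph.fromEdgeSet ((G.edgeSet \ {s(r, s)}) ∪ {s(k, l)})

/-- The edge-replacement `rs → kl` is feasible: `v_r v_s ∈ E(G)`, `v_k v_l` is a non-edge or
`{k,l} = {r,s}`, and `G - v_r v_s + v_k v_l ≅ G`. -/
def IsFeasible {V : Type*} (G : SimpleGraph V) (r s k l : V) : Prop :=
  G.Adj r s ∧ (Gᶜ.Adj k l ∨ s(k, l) = s(r, s)) ∧ Nonempty (replaceG G r s k l ≃g G)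

/-- The permutations realizing feasible edge-replacements of `G`. -/
def feasiblePerms {V : Type*} (G : SimpleGraph V) : Set (Equiv.Perm V) :=
  {σ | ∃ r s k l, IsFeasible G r s k l ∧ copyG G σ = replaceG G r s k l}

/-- The group `S_G` generated by all permutations realizing feasible edge-replacements. -/
def ampGroup {V : Type*} (G : SimpleGraph V) : Subgroup (Equiv.Perm V) :=
  Subgroup.closure (feasiblePerms G)

/-- `G` is a local amoeba if `S_G` is the full symmetric group. -/
def LocalAmoeba {V : Type*} (G : SimpleGraph V) : Prop := ampGroup G = ⊤

/-- Disjoint union of two graphs. -/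
def sumGraph {V W : Type*} (H : SimpleGraph V) (H' : SimpleGraph W) : SimpleGraph (V ⊕ W) :=
  SimpleGraph.map (⟨Sum.inl, Sum.inl_injective⟩ : V ↪ V ⊕ W) H ⊔ SimpleGraph.map (⟨Sum.inr, Sum.inr_injective⟩ : W ↪ V ⊕ W) H'

/-- `G` together with `t` additional isolated vertices. -/
def addIsolated {V : Type*} (G : SimpleGraph V) (t : ℕ) : SimpleGraph (V ⊕ Fin t) :=
  sumGraph G (⊥ : SimpleGraph (Fin t))

/-- `G` is a global amoeba if `G ∪ tK₁` is a local amoeba for all sufficiently large `t`. -/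
def GlobalAmoeba {V : Type*} (G : SimpleGraph V) : Prop :=
  ∃ T : ℕ, ∀ t ≥ T, LocalAmoeba (addIsolated G t)

/-! A feasible replacement `rs → kl` changes every degree by at most one, and the permutation
realizing it carries each vertex `x` to a vertex whose degree is the degree of `x` after the
replacement. Hence if a value `d` strictly between two attained degrees is not attained, the set of
vertices of degree `≥ d` is invariant under `S_G`, which is impossible when `S_G = S_n`. Adding
isolated vertices attains degree `0`, so a global amoeba attains every degree in `[Δ]`. Finally,
`v_1, …, v_i` have degree at least `d_i`, and vertices of degrees `1, …, d_i - 1` are `d_i - 1`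
further vertices, so `i + d_i - 1 ≤ n`. -/

open Pointwise

theorem ncard_neighborSet_copyG {W : Type*} (H : SimpleGraph W) (σ : Perm W) (x : W) :
    ((copyG H σ).neighborSet x).ncard = (H.neighborSet (σ x)).ncard := by
  let iso : copyG H σ ≃g H := ⟨σ, Iff.rfl⟩
  rw [← Set.ncard_image_of_injective _ iso.injective]
  exact congrArg Set.ncard (iso.image_neighborSet (v := x))

theorem ncard_neighborSet_le_replaceG_add_one {W : Type*} [Finite W] (H : SimpleGraph W)
    {r s : W} (k l : W) (hrs : r ≠ s) (x : W) :
    (H.neighborSet x).ncard ≤ ((replaceG H r s k l).neighborSet x).ncard + 1 := by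
  classical
  let w := if x = r then s else r
  have hsub : H.neighborSet x ⊆ insert w ((replaceG H r s k l).neighborSet x) := by
    intro y (hxy : H.Adj x y)
    by_cases he : s(x, y) = s(r, s)
    · left
      rcases Sym2.eq_iff.mp he with ⟨rfl, rfl⟩ | ⟨rfl, rfl⟩
      · simp [w]
      · simp [w, hrs.symm]
    · right
      exact (fromEdgeSet_adj _).mpr ⟨Or.inl ⟨hxy, he⟩, hxy.ne⟩
  calc (H.neighborSet x).ncard ≤ (insert w ((replaceG H r s k l).neighborSet x)).ncard :=
        Set.ncard_le_ncard hsub (Set.toFinite _)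
    _ ≤ _ := Set.ncard_insert_le _ _

theorem neighborSet_addIsolated_inl {V : Type*} (G : SimpleGraph V) (t : ℕ) (v : V) :
    (addIsolated G t).neighborSet (.inl v) = Sum.inl '' G.neighborSet v := by
  ext (u | j)
  · simpa [addIsolated, sumGraph, map_adj'] using fun h : G.Adj v u ↦ h.ne
  · simp [addIsolated, sumGraph, map_adj']

theorem neighborSet_addIsolated_inr {V : Type*} (G : SimpleGraph V) (t : ℕ) (j : Fin t) :
    (addIsolated G t).neighborSet (.inr j) = ∅ := by
  ext (u | j) <;> simp [addIsolated, sumGraph, map_adj']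

theorem LocalAmoeba.exists_ncard_neighborSet_eq {W : Type*} [Finite W] {H : SimpleGraph W}
    (hH : LocalAmoeba H) {a b : W} {d : ℕ} (ha : (H.neighborSet a).ncard < d)
    (hb : d ≤ (H.neighborSet b).ncard) : ∃ v, (H.neighborSet v).ncard = d := by
  classical
  by_contra! hgap
  let A : Set W := {x | d ≤ (H.neighborSet x).ncard}
  have hmaps : ∀ σ ∈ feasiblePerms H, σ • A = A := by
    rintro σ ⟨r, s, k, l, ⟨hrs, -, -⟩, hσ⟩
    have hsub : σ • A ⊆ A := by
      rintro - ⟨x, hx : d ≤ _, rfl⟩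
      have hle := ncard_neighborSet_le_replaceG_add_one H k l hrs.ne x
      rw [← hσ, ncard_neighborSet_copyG] at hle
      have hne := hgap x
      show d ≤ (H.neighborSet (σ x)).ncard
      omega
    exact Set.eq_of_subset_of_ncard_le hsub
      (Set.ncard_image_of_injective _ σ.injective).ge (Set.toFinite _)
  have hstab : ampGroup H ≤ MulAction.stabilizer (Perm W) A :=
    (Subgroup.closure_le _).mpr hmaps
  have hswap : swap a b • A = A := hstab (hH ▸ Subgroup.mem_top _)
  have hmem : swap a b • b ∈ swap a b • A := Set.smul_mem_smul_set (show b ∈ A from hb)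
  rw [hswap, Perm.smul_def, swap_apply_right] at hmem
  exact ha.not_ge hmem

theorem GlobalAmoeba.exists_degree_eq {V : Type*} [Fintype V] {G : SimpleGraph V}
    [DecidableRel G.Adj] (hG : GlobalAmoeba G) {d : ℕ} (hd : 1 ≤ d) (hdΔ : d ≤ G.maxDegree) :
    ∃ v, G.degree v = d := by
  obtain ⟨b, hb⟩ : ∃ b, d ≤ G.degree b := by
    by_contra! h
    have := G.maxDegree_le_of_forall_degree_le (d - 1) fun v ↦ Nat.le_pred_of_lt (h v)
    omega
  obtain ⟨T, hT⟩ := hG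
  have hdeg : ∀ v, ((addIsolated G (T + 1)).neighborSet (.inl v)).ncard = G.degree v := by
    intro v
    rw [neighborSet_addIsolated_inl, Set.ncard_image_of_injective _ Sum.inl_injective,
      Set.ncard_eq_toFinset_card', Set.toFinset_card, card_neighborSet_eq_degree]
  obtain ⟨v | j, hv⟩ := (hT (T + 1) T.le_succ).exists_ncard_neighborSet_eq
    (a := .inr 0) (b := .inl b) (by rw [neighborSet_addIsolated_inr, Set.ncard_empty]; omega)
    ((hdeg b).symm ▸ hb)
  · exact ⟨v, (hdeg v).symm.trans hv⟩
  · rw [neighborSet_addIsolated_inr, Set.ncard_empty] at hv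
    omega

theorem degree_set_eq_Icc_or_insert_zero {V : Type*} [Fintype V] {G : SimpleGraph V}
    [DecidableRel G.Adj] (h : ∀ d, 1 ≤ d → d ≤ G.maxDegree → ∃ v, G.degree v = d) :
    {d | ∃ v, G.degree v = d} = Set.Icc 1 G.maxDegree ∨
      {d | ∃ v, G.degree v = d} = insert 0 (Set.Icc 1 G.maxDegree) := by
  have hpos : ∀ d ≠ 0, (∃ v, G.degree v = d) ↔ d ∈ Set.Icc 1 G.maxDegree := by
    refine fun d hd ↦ ⟨?_, fun ⟨h1, h2⟩ ↦ h d h1 h2⟩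
    rintro ⟨v, rfl⟩
    exact ⟨Nat.one_le_iff_ne_zero.mpr hd, G.degree_le_maxDegree v⟩
  by_cases h0 : ∃ v, G.degree v = 0
  · refine .inr (Set.ext fun d ↦ ?_)
    rcases eq_or_ne d 0 with rfl | hd
    · simpa using h0
    · simpa [hd] using hpos d hd
  · refine .inl (Set.ext fun d ↦ ?_)
    rcases eq_or_ne d 0 with rfl | hd
    · simpa using h0
    · exact hpos d hd

open Finset in
theorem card_degree_ge_add_degree_le {V : Type*} [Fintype V] {G : SimpleGraph V}
    [DecidableRel G.Adj] (h : ∀ d, 1 ≤ d → d ≤ G.maxDegree → ∃ v, G.degree v = d) (v : V) :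
    #{u | G.degree v ≤ G.degree u} + G.degree v ≤ Fintype.card V + 1 := by
  have hlow : Icc 1 (G.degree v - 1) ⊆
      ({u | G.degree u < G.degree v} : Finset V).image (G.degree ·) := by
    intro d hd
    rw [mem_Icc] at hd
    obtain ⟨u, rfl⟩ := h d hd.1 (by have := G.degree_le_maxDegree v; omega)
    exact mem_image_of_mem _ (mem_filter.mpr ⟨mem_univ u, by omega⟩)
  have hlow_card : G.degree v - 1 ≤ #{u | G.degree u < G.degree v} := by
    simpa using (card_le_card hlow).trans card_image_le
  have hsplit : #{u | G.degree v ≤ G.degree u} + #{u | G.degree u < G.degree v} =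
      Fintype.card V := by
    simpa using card_filter_add_card_filter_not (s := univ) (G.degree v ≤ G.degree ·)
  omega

open Finset in
theorem succ_le_card_filter_le_of_antitone {α β : Type*} [Fintype α] [Preorder β]
    [DecidableLE β] {n : ℕ} (e : Fin n ≃ α) {f : α → β} (hf : ∀ i j, i ≤ j → f (e j) ≤ f (e i)) (i : Fin n) :
    i.val + 1 ≤ #{u | f (e i) ≤ f u} := by
  have hhead : (Iic i).map e.toEmbedding ⊆ ({u | f (e i) ≤ f u} : Finset α) := by
    intro u hu
    obtain ⟨j, hj, rfl⟩ := mem_map.mp hu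
    exact mem_filter.mpr ⟨mem_univ _, hf j i (mem_Iic.mp hj)⟩
  simpa using card_le_card hhead

theorem stmt8_general {V : Type*} [Fintype V] (G : SimpleGraph V) [DecidableRel G.Adj]
    (hG : GlobalAmoeba G) :
    ({d : ℕ | ∃ v : V, G.degree v = d} = Set.Icc 1 G.maxDegree ∨
      {d : ℕ | ∃ v : V, G.degree v = d} = insert 0 (Set.Icc 1 G.maxDegree)) ∧
    ∀ e : Fin (Fintype.card V) ≃ V,
      (∀ i j : Fin (Fintype.card V), i ≤ j → G.degree (e j) ≤ G.degree (e i)) →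
      ∀ i : Fin (Fintype.card V), G.degree (e i) ≤ Fintype.card V + 1 - (i.val + 1) := by
  have hdeg : ∀ d, 1 ≤ d → d ≤ G.maxDegree → ∃ v, G.degree v = d :=
    fun _ ↦ hG.exists_degree_eq
  refine ⟨degree_set_eq_Icc_or_insert_zero hdeg, fun e hsorted i ↦ ?_⟩
  have hhead := succ_le_card_filter_le_of_antitone e (f := (G.degree ·)) hsorted i
  have hcount := card_degree_ge_add_degree_le hdeg (e i)
  omega

theorem stmt8 {V : Type*} [Fintype V] [Nonempty V] (G : SimpleGraph V) [DecidableRel G.Adj]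
    (hG : GlobalAmoeba G) :
    ({d : ℕ | ∃ v : V, G.degree v = d} = Set.Icc 1 G.maxDegree ∨
      {d : ℕ | ∃ v : V, G.degree v = d} = insert 0 (Set.Icc 1 G.maxDegree)) ∧
    ∀ e : Fin (Fintype.card V) ≃ V,
      (∀ i j : Fin (Fintype.card V), i ≤ j → G.degree (e j) ≤ G.degree (e i)) →
      ∀ i : Fin (Fintype.card V), G.degree (e i) ≤ Fintype.card V + 1 - (i.val + 1) :=
  stmt8_general G hG
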